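/- arXiv:0903.2555 — 2 statements merged into one kernel-verified Lean document; each statement's English description precedes it below -/
import Mathlib

section
/- Let X, Y be subsets of the positive integers and n ≥ 1 an integer with n+1 ∉ X. Then for all k ≥ 0, D_{n+1,k}^{X,Y} = (k+1) · D_{n,k+1}^{X,Y} + (n+1−k) · D_{n,k}^{X,Y}. -/
/-!
Inserting the new maximum `n + 1` into a permutation of `[n]` creates no `(X,Y)`-descent
(`n + 1 ∉ X`, and `n + 1` is never the smaller letter of a descent) and destroys exactly the
descent whose two letters it separates, if any. So if `σ` has `d` descents, `d` of the `n + 1`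
insertion positions give `d - 1` descents and the other `n + 1 - d` give `d`; summing over `σ`
yields the recurrence.
-/

/-- `cnt X n` is `|X ∩ [n]|` where `[n] = {1, ..., n}`. -/
noncomputable def cnt (X : Set ℕ) (n : ℕ) : ℕ := (X ∩ Set.Icc 1 n).ncard

/-- `des_{X,Y}(σ)`: number of `i` with `σ_i > σ_{i+1}`, `σ_i ∈ X` and `σ_{i+1} ∈ Y`
(positions and values of `Fin n` are identified with `{1, ..., n}` via `i ↦ i + 1`). -/
noncomputable def desCount (X Y : Set ℕ) (n : ℕ) (σ : Equiv.Perm (Fin n)) : ℕ :=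
  {i : Fin n | ∃ h : (i : ℕ) + 1 < n,
    (σ ⟨(i : ℕ) + 1, h⟩ : ℕ) < (σ i : ℕ) ∧
    ((σ i : ℕ) + 1) ∈ X ∧ ((σ ⟨(i : ℕ) + 1, h⟩ : ℕ) + 1) ∈ Y}.ncard

/-- `D_{n,s}^{X,Y}`: the number of permutations of `[n]` with exactly `s`
`(X,Y)`-descents. -/
noncomputable def D (X Y : Set ℕ) (n s : ℕ) : ℕ :=
  Nat.card {σ : Equiv.Perm (Fin n) | desCount X Y n σ = s}

open Equiv

theorem Fin.val_succAbove_eq_succ_iff {n : ℕ} (j : Fin (n + 1)) (p q : Fin n) :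
    (j.succAbove q : ℕ) = j.succAbove p + 1 ↔ (q : ℕ) = p + 1 ∧ j ≠ p.succ := by
  simp only [Fin.succAbove, Fin.lt_def, ne_eq, Fin.ext_iff]
  split_ifs <;> simp only [Fin.val_succ, Fin.val_castSucc] at * <;> omega

theorem Set.ncard_setOf_ncard_sdiff_singleton_eq {α : Type*} [Finite α] (G : Set α) (k : ℕ) :
    ({j | (G \ {j}).ncard = k}.ncard : ℤ) =
      (if G.ncard = k + 1 then (k : ℤ) + 1 else 0) +
        (if G.ncard = k then (Nat.card α : ℤ) - k else 0) := by
  have hcard : ∀ j, (G \ {j}).ncard = k ↔ j ∈ G ∧ G.ncard = k + 1 ∨ j ∉ G ∧ G.ncard = k := by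
    intro j
    by_cases hj : j ∈ G
    · have := Set.ncard_sdiff_singleton_add_one hj
      simp only [hj, true_and, not_true, false_and, or_false]
      omega
    · simp [hj, Set.sdiff_singleton_eq_self hj]
  by_cases h1 : G.ncard = k + 1
  · have : {j | (G \ {j}).ncard = k} = G := by ext j; simp [hcard, h1]
    simp [this, h1]
  by_cases h2 : G.ncard = k
  · have : {j | (G \ {j}).ncard = k} = Gᶜ := by ext j; simp [hcard, h2]
    have hc := Set.ncard_add_ncard_compl G
    rw [this, if_neg h1, if_pos h2]; omega
  · have : {j | (G \ {j}).ncard = k} = ∅ := by ext j; simp [hcard, h1, h2]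
    simp [this, h1, h2]

/-- In one-line notation, `σ₁ ⋯ σⱼ (n+1) σⱼ₊₁ ⋯ σₙ`. -/
def insertMax {n : ℕ} (j : Fin (n + 1)) (σ : Perm (Fin n)) : Perm (Fin (n + 1)) :=
  (finSuccEquiv' j).trans ((optionCongr σ).trans (finSuccEquiv' (Fin.last n)).symm)

@[simp]
theorem insertMax_apply_self {n : ℕ} (j : Fin (n + 1)) (σ : Perm (Fin n)) :
    insertMax j σ j = Fin.last n := by
  simp [insertMax]

@[simp]
theorem insertMax_apply_succAbove {n : ℕ} (j : Fin (n + 1)) (σ : Perm (Fin n)) (i : Fin n) :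
    insertMax j σ (j.succAbove i) = (σ i).castSucc := by
  simp [insertMax]

theorem insertMax_injective (n : ℕ) :
    Function.Injective fun x : Perm (Fin n) × Fin (n + 1) => insertMax x.2 x.1 := by
  rintro ⟨σ, j⟩ ⟨σ', j'⟩ he
  simp only at he
  obtain rfl : j = j' := by
    by_contra hne
    obtain ⟨i, rfl⟩ := Fin.exists_succAbove_eq (Ne.symm hne)
    have := insertMax_apply_succAbove j σ i
    rw [he, insertMax_apply_self] at this
    exact (Fin.castSucc_lt_last _).ne this.symm
  have : σ = σ' := Equiv.ext fun i => Fin.castSucc_injective n <| by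
    rw [← insertMax_apply_succAbove j σ, he, insertMax_apply_succAbove]
  rw [this]

noncomputable def insertMaxEquiv (n : ℕ) : Perm (Fin n) × Fin (n + 1) ≃ Perm (Fin (n + 1)) :=
  .ofBijective _ <| (Fintype.bijective_iff_injective_and_card _).2
    ⟨insertMax_injective n, by simp [Fintype.card_perm, Nat.factorial_succ, mul_comm]⟩

section Descents

variable (X Y : Set ℕ)

def IsXYDescent {m : ℕ} (a b : Fin m) : Prop :=
  b < a ∧ (a : ℕ) + 1 ∈ X ∧ (b : ℕ) + 1 ∈ Y

def descentSet {m : ℕ} (τ : Perm (Fin m)) : Set (Fin m) :=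
  {i | ∃ i' : Fin m, (i' : ℕ) = i + 1 ∧ IsXYDescent X Y (τ i) (τ i')}

theorem desCount_eq_ncard_descentSet {m : ℕ} (τ : Perm (Fin m)) :
    desCount X Y m τ = (descentSet X Y τ).ncard := by
  unfold desCount
  congr 1
  ext i
  constructor
  · rintro ⟨h, hd⟩
    exact ⟨⟨i + 1, h⟩, rfl, hd⟩
  · rintro ⟨⟨_, h⟩, rfl, hd⟩
    exact ⟨h, hd⟩

variable {X Y}

theorem descentSet_insertMax {n : ℕ} (hX : n + 1 ∉ X) (j : Fin (n + 1)) (σ : Perm (Fin n)) :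
    descentSet X Y (insertMax j σ) = j.succAbove '' (descentSet X Y σ \ Fin.succ ⁻¹' {j}) := by
  ext i
  constructor
  · rintro ⟨i', hi', hd⟩
    have hij : i ≠ j := by
      rintro rfl
      rw [insertMax_apply_self] at hd
      exact hX hd.2.1
    have hi'j : i' ≠ j := by
      rintro rfl
      rw [insertMax_apply_self] at hd
      exact (Fin.le_last _).not_gt hd.1
    obtain ⟨p, rfl⟩ := Fin.exists_succAbove_eq hij
    obtain ⟨q, rfl⟩ := Fin.exists_succAbove_eq hi'j
    obtain ⟨hqp, hjp⟩ := (Fin.val_succAbove_eq_succ_iff j p q).1 hi'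
    rw [insertMax_apply_succAbove, insertMax_apply_succAbove] at hd
    exact ⟨p, ⟨⟨q, hqp, hd⟩, Ne.symm hjp⟩, rfl⟩
  · rintro ⟨p, ⟨⟨q, hqp, hd⟩, hjp⟩, rfl⟩
    refine ⟨j.succAbove q, (Fin.val_succAbove_eq_succ_iff j p q).2 ⟨hqp, Ne.symm hjp⟩, ?_⟩
    rw [insertMax_apply_succAbove, insertMax_apply_succAbove]
    exact hd

theorem desCount_insertMax {n : ℕ} (hX : n + 1 ∉ X) (j : Fin (n + 1)) (σ : Perm (Fin n)) :
    desCount X Y (n + 1) (insertMax j σ) = (Fin.succ '' descentSet X Y σ \ {j}).ncard := by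
  rw [desCount_eq_ncard_descentSet, descentSet_insertMax hX,
    Set.ncard_image_of_injective _ (Fin.succAbove_right_injective),
    ← Set.image_sdiff_preimage, Set.ncard_image_of_injective _ (Fin.succ_injective n)]

theorem desCount_eq_ncard_image_succ {n : ℕ} (σ : Perm (Fin n)) :
    desCount X Y n σ = (Fin.succ '' descentSet X Y σ).ncard := by
  rw [desCount_eq_ncard_descentSet, Set.ncard_image_of_injective _ (Fin.succ_injective n)]

end Descents

theorem D_eq_card_filter (X Y : Set ℕ) (n s : ℕ) :
    D X Y n s = (Finset.univ.filter fun σ : Perm (Fin n) => desCount X Y n σ = s).card := by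
  classical
  rw [D, Nat.card_eq_fintype_card, Fintype.card_subtype]
  rfl

theorem D_succ_eq_sum_ncard (X Y : Set ℕ) (n k : ℕ) :
    D X Y (n + 1) k =
      ∑ σ : Perm (Fin n), {j : Fin (n + 1) | desCount X Y (n + 1) (insertMax j σ) = k}.ncard := by
  let P σ j := desCount X Y (n + 1) (insertMax j σ) = k
  have e : {x : Perm (Fin n) × Fin (n + 1) // P x.1 x.2} ≃ {τ | desCount X Y (n + 1) τ = k} :=
    (insertMaxEquiv n).subtypeEquiv fun _ => Iff.rfl
  rw [D, ← Nat.card_congr e, Nat.card_congr (subtypeProdEquivSigmaSubtype P), Nat.card_sigma]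
  rfl

theorem ncard_setOf_desCount_insertMax_eq {X Y : Set ℕ} {n : ℕ} (hX : n + 1 ∉ X)
    (σ : Perm (Fin n)) (k : ℕ) :
    ({j : Fin (n + 1) | desCount X Y (n + 1) (insertMax j σ) = k}.ncard : ℤ) =
      (if desCount X Y n σ = k + 1 then (k : ℤ) + 1 else 0) +
        (if desCount X Y n σ = k then (n : ℤ) + 1 - k else 0) := by
  simp only [desCount_insertMax hX, desCount_eq_ncard_image_succ,
    Set.ncard_setOf_ncard_sdiff_singleton_eq, Nat.card_eq_fintype_card, Fintype.card_fin,
    Nat.cast_add, Nat.cast_one]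

theorem D_rec_not_mem_general (X Y : Set ℕ) (n : ℕ)
    (h : n + 1 ∉ X) (k : ℕ) :
    (D X Y (n + 1) k : ℤ) =
      ((k : ℤ) + 1) * (D X Y n (k + 1) : ℤ) +
        ((n : ℤ) + 1 - (k : ℤ)) * (D X Y n k : ℤ) := by
  rw [D_succ_eq_sum_ncard, Nat.cast_sum]
  simp only [ncard_setOf_desCount_insertMax_eq h, Finset.sum_add_distrib, ← Finset.sum_filter,
    Finset.sum_const, nsmul_eq_mul, D_eq_card_filter]
  ring

/-- Recurrence for `D_{n,k}^{X,Y}` when `n+1 ∉ X`: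
`D_{n+1,k} = (k+1) D_{n,k+1} + (n+1-k) D_{n,k}`. -/
theorem D_rec_not_mem (X Y : Set ℕ) (hX : 0 ∉ X) (hY : 0 ∉ Y) (n : ℕ) (hn : 1 ≤ n)
    (h : n + 1 ∉ X) (k : ℕ) :
    (D X Y (n + 1) k : ℤ) =
      ((k : ℤ) + 1) * (D X Y n (k + 1) : ℤ) +
        ((n : ℤ) + 1 - (k : ℤ)) * (D X Y n k : ℤ) :=
  D_rec_not_mem_general X Y n h k
end

section
/- Let X, Y be subsets of the positive integers and n ≥ 1 an integer with n+1 ∈ X ∩ Y. Then for all k ≥ 0, V_{n+1,k}^{X,Y} = (1 + x_n + y_n − (k−1)) · V_{n,k−1}^{X,Y} + (n+1 − (1 + x_n + y_n − k)) · V_{n,k}^{X,Y}, where the term with V_{n,k−1}^{X,Y} is omitted when k = 0. -/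
/-- `val_{X,Y}(σ)`: number of positions `i ∈ [n]` with `i ∈ X` and `σ_i ∈ Y`
(positions and values of `Fin n` are identified with `{1, ..., n}` via `i ↦ i + 1`). -/
noncomputable def valCount (X Y : Set ℕ) (n : ℕ) (σ : Equiv.Perm (Fin n)) : ℕ :=
  {i : Fin n | ((i : ℕ) + 1) ∈ X ∧ (((σ i : ℕ)) + 1) ∈ Y}.ncard

/-- `V_{n,k}^{X,Y}`: the number of permutations of `[n]` with exactly `k`
`(X,Y)`-place-value pairs. -/
noncomputable def V (X Y : Set ℕ) (n k : ℕ) : ℕ :=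
  Nat.card {σ : Equiv.Perm (Fin n) | valCount X Y n σ = k}

/-!
Write `σ ∈ S_{n+1}` uniquely as `σ = (n+1 i) ∘ τ̂`, where `i = σ(n+1)` and `τ̂` extends `τ ∈ S_n`
by fixing `n+1`. For `i = n+1` this adds the pair `(n+1, n+1)`; otherwise the pair `(j, i)` with
`j = τ⁻¹ i` is replaced by `(j, n+1)` and `(n+1, i)`. As `n+1 ∈ X ∩ Y`, the value grows by one
exactly when `j ∈ X` or `i ∈ Y`, which happens for `x_n + y_n - val τ` of the `i ≤ n`, and is
unchanged otherwise. Summing over `τ` the number of `i` of each kind gives the recurrence.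
-/

open Finset Equiv

open scoped Classical

lemma cnt_eq_card (X : Set ℕ) (n : ℕ) : cnt X n = #{i : Fin n | (i : ℕ) + 1 ∈ X} := by
  have himage :
      X ∩ Set.Icc 1 n = (fun i : Fin n => (i : ℕ) + 1) '' {i | (i : ℕ) + 1 ∈ X} := by
    ext m
    constructor
    · rintro ⟨hm, h1, hn⟩
      exact ⟨⟨m - 1, by omega⟩, by simpa [Nat.sub_add_cancel h1] using hm, by simp; omega⟩
    · rintro ⟨i, hi, rfl⟩
      exact ⟨hi, by simp, by simp [Nat.succ_le_of_lt i.isLt]⟩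
  rw [cnt, himage, Set.ncard_image_of_injective _ (fun i j h => Fin.ext (by simpa using h)),
    Set.ncard_eq_toFinset_card', Set.toFinset_ofPred]

lemma valCount_eq_card (X Y : Set ℕ) (n : ℕ) (σ : Perm (Fin n)) :
    valCount X Y n σ = #{i : Fin n | (i : ℕ) + 1 ∈ X ∧ (σ i : ℕ) + 1 ∈ Y} := by
  rw [valCount, Set.ncard_eq_toFinset_card', Set.toFinset_ofPred]

lemma V_eq_card (X Y : Set ℕ) (n k : ℕ) :
    V X Y n k = #{σ : Perm (Fin n) | valCount X Y n σ = k} := by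
  rw [V, Nat.card_coe_set_eq, Set.ncard_eq_toFinset_card', Set.toFinset_ofPred]

lemma card_filter_add_ite_eq {ι : Type*} (s : Finset ι) (p : ι → Prop) [DecidablePred p]
    (v k : ℕ) :
    #{i ∈ s | v + (if p i then 1 else 0) = k} =
      (if v + 1 = k then #{i ∈ s | p i} else 0) + (if v = k then #{i ∈ s | ¬ p i} else 0) := by
  split_ifs
  · omega
  · rw [add_zero]; congr 1; exact filter_congr fun i _ => by split_ifs <;> simp_all
  · rw [zero_add]; congr 1; exact filter_congr fun i _ => by split_ifs <;> simp_all
  · rw [filter_false_of_mem fun i _ => by split_ifs <;> omega, card_empty, add_zero]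

/-- `insertLast (i, τ)` is `swap (last n) i * τ̂`, where `τ̂` fixes `last n` and agrees with `τ`
elsewhere; it sends `last n` to `i`. -/
noncomputable def insertLast {n : ℕ} : Fin (n + 1) × Perm (Fin n) ≃ Perm (Fin (n + 1)) :=
  (finSuccEquivLast.prodCongr (Equiv.refl _)).trans
    (Perm.decomposeOption.symm.trans (permCongr finSuccEquivLast.symm))

lemma insertLast_apply_last {n : ℕ} (i : Fin (n + 1)) (τ : Perm (Fin n)) :
    insertLast (i, τ) (Fin.last n) = i := by
  simp [insertLast, Perm.decomposeOption, permCongr_apply]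

lemma insertLast_apply_castSucc {n : ℕ} (i : Fin (n + 1)) (τ : Perm (Fin n)) (j : Fin n) :
    insertLast (i, τ) j.castSucc = swap (Fin.last n) i (τ j).castSucc := by
  rw [← finSuccEquivLast.symm_apply_apply (swap _ _ _), finSuccEquivLast.injective.map_swap]
  simp [insertLast, Perm.decomposeOption, permCongr_apply]

lemma card_symm_mem_or_mem_add_valCount (X Y : Set ℕ) (n : ℕ) (τ : Perm (Fin n)) :
    #{i | (τ.symm i : ℕ) + 1 ∈ X ∨ (i : ℕ) + 1 ∈ Y} + valCount X Y n τ =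
      cnt X n + cnt Y n := by
  have hX : #{i | (τ.symm i : ℕ) + 1 ∈ X} = cnt X n := by
    rw [cnt_eq_card]; exact card_equiv τ.symm (by simp)
  have hXY : valCount X Y n τ = #{i | (τ.symm i : ℕ) + 1 ∈ X ∧ (i : ℕ) + 1 ∈ Y} := by
    rw [valCount_eq_card]; exact card_equiv τ (by simp)
  rw [filter_or, hXY, filter_and, card_union_add_card_inter, hX, cnt_eq_card Y]

section InsertLast

variable {X Y : Set ℕ} {n : ℕ}

lemma valCount_insertLast_last (hX : n + 1 ∈ X) (hY : n + 1 ∈ Y) (τ : Perm (Fin n)) :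
    valCount X Y (n + 1) (insertLast (Fin.last n, τ)) = valCount X Y n τ + 1 := by
  rw [valCount_eq_card, valCount_eq_card, card_filter, card_filter, Fin.sum_univ_castSucc]
  simp [insertLast_apply_castSucc, insertLast_apply_last, hX, hY]

lemma valCount_insertLast_castSucc (hX : n + 1 ∈ X) (hY : n + 1 ∈ Y) (i : Fin n)
    (τ : Perm (Fin n)) :
    valCount X Y (n + 1) (insertLast (i.castSucc, τ)) =
      valCount X Y n τ + if (τ.symm i : ℕ) + 1 ∈ X ∨ (i : ℕ) + 1 ∈ Y then 1 else 0 := by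
  rw [valCount_eq_card, valCount_eq_card, card_filter, card_filter, Fin.sum_univ_castSucc,
    insertLast_apply_last]
  set j₀ := τ.symm i
  rw [← add_sum_erase _ _ (mem_univ j₀), ← add_sum_erase _ _ (mem_univ j₀)]
  have hrest :
      ∀ j ∈ univ.erase j₀, insertLast (i.castSucc, τ) j.castSucc = (τ j).castSucc := by
    intro j hj
    have hτj : τ j ≠ i := fun h => ne_of_mem_erase hj (τ.eq_symm_apply.mpr h)
    rw [insertLast_apply_castSucc, swap_apply_of_ne_of_ne (Fin.castSucc_lt_last _).ne
      (fun h => hτj (Fin.castSucc_injective n h))]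
  have hj₀ : insertLast (i.castSucc, τ) j₀.castSucc = Fin.last n := by
    rw [insertLast_apply_castSucc, apply_symm_apply, swap_apply_right]
  rw [sum_congr rfl fun j hj => by rw [hrest j hj], hj₀, apply_symm_apply]
  by_cases hx : (j₀ : ℕ) + 1 ∈ X <;> by_cases hy : (i : ℕ) + 1 ∈ Y <;>
    simp [*, add_comm]

lemma card_insertLast_fiber (hX : n + 1 ∈ X) (hY : n + 1 ∈ Y)
    (τ : Perm (Fin n)) (k : ℕ) :
    (#{i | valCount X Y (n + 1) (insertLast (i, τ)) = k} : ℤ) =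
      (if valCount X Y n τ + 1 = k then 1 + (cnt X n : ℤ) + cnt Y n - (k - 1) else 0) +
        (if valCount X Y n τ = k then (n : ℤ) + 1 - (1 + cnt X n + cnt Y n - k) else 0) := by
  have hsplit : #{i | valCount X Y (n + 1) (insertLast (i, τ)) = k} =
      #{i : Fin n | valCount X Y n τ +
        (if (τ.symm i : ℕ) + 1 ∈ X ∨ (i : ℕ) + 1 ∈ Y then 1 else 0) = k} +
      if valCount X Y n τ + 1 = k then 1 else 0 := by
    rw [card_filter, card_filter, Fin.sum_univ_castSucc, valCount_insertLast_last hX hY]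
    simp only [valCount_insertLast_castSucc hX hY]
  have hcompl := card_filter_add_card_filter_not (s := univ)
    (p := fun i : Fin n => (τ.symm i : ℕ) + 1 ∈ X ∨ (i : ℕ) + 1 ∈ Y)
  have hcount := card_symm_mem_or_mem_add_valCount X Y n τ
  rw [hsplit, card_filter_add_ite_eq]
  simp only [card_univ, Fintype.card_fin] at hcompl
  split_ifs <;> push_cast <;> omega

end InsertLast

lemma V_succ_eq_sum_card (X Y : Set ℕ) (n k : ℕ) :
    V X Y (n + 1) k =
      ∑ τ : Perm (Fin n), #{i | valCount X Y (n + 1) (insertLast (i, τ)) = k} := by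
  have hreindex : #{σ | valCount X Y (n + 1) σ = k} =
      #{p | valCount X Y (n + 1) (insertLast p) = k} :=
    card_equiv insertLast.symm (by simp)
  rw [V_eq_card, hreindex, card_filter, Fintype.sum_prod_type, sum_comm]
  simp only [card_filter]

lemma sum_ite_valCount_eq (X Y : Set ℕ) (n j : ℕ) (c : ℤ) :
    ∑ τ : Perm (Fin n), (if valCount X Y n τ = j then c else 0) = c * V X Y n j := by
  rw [← sum_filter, sum_const, V_eq_card, nsmul_eq_mul, mul_comm]

theorem V_rec_case2_general (X Y : Set ℕ) (n : ℕ)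
    (h : n + 1 ∈ X ∩ Y) (k : ℕ) :
    (V X Y (n + 1) k : ℤ) =
      (if k = 0 then 0 else
        (1 + (cnt X n : ℤ) + (cnt Y n : ℤ) - ((k : ℤ) - 1)) * (V X Y n (k - 1) : ℤ)) +
        ((n : ℤ) + 1 - (1 + (cnt X n : ℤ) + (cnt Y n : ℤ) - (k : ℤ))) * (V X Y n k : ℤ) := by
  rw [V_succ_eq_sum_card, Nat.cast_sum]
  simp only [card_insertLast_fiber h.1 h.2, sum_add_distrib, sum_ite_valCount_eq]
  congr 1
  split_ifs with hk
  · simp [hk]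
  · rw [← sum_ite_valCount_eq]
    exact sum_congr rfl fun τ _ => if_congr (by omega) rfl rfl

/-- Recurrence for `V_{n,k}^{X,Y}` when `n+1 ∈ X ∩ Y`:
`V_{n+1,k} = (1 + x_n + y_n - (k-1)) V_{n,k-1} + (n+1 - (1 + x_n + y_n - k)) V_{n,k}`,
the first term being omitted when `k = 0`. -/
theorem V_rec_case2 (X Y : Set ℕ) (hX : 0 ∉ X) (hY : 0 ∉ Y) (n : ℕ) (hn : 1 ≤ n)
    (h : n + 1 ∈ X ∩ Y) (k : ℕ) :
    (V X Y (n + 1) k : ℤ) =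
      (if k = 0 then 0 else
        (1 + (cnt X n : ℤ) + (cnt Y n : ℤ) - ((k : ℤ) - 1)) * (V X Y n (k - 1) : ℤ)) +
        ((n : ℤ) + 1 - (1 + (cnt X n : ℤ) + (cnt Y n : ℤ) - (k : ℤ))) * (V X Y n k : ℤ) :=
  V_rec_case2_general X Y n h k
end
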